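/- Let β > 0 and let G = (V,E) be a graph on n vertices such that every separator in G has size at least βn. Then G contains an induced subgraph on at least 2n/3 vertices which is a (3β/2)-expander. -/

import Mathlib

open scoped Classical

/-- The external neighborhood of a vertex set `U` in a simple graph `G`:
all vertices outside `U` having a neighbor in `U`. -/
def SimpleGraph.extNb {V : Type*} (G : SimpleGraph V) (U : Set V) : Set V :=
  {v | v ∉ U ∧ ∃ u ∈ U, G.Adj u v}

/-- A graph `G` on `n` vertices is an `α`-expander if every vertex subset `U` with
`|U| ≤ n/2` satisfies `|N_G(U)| ≥ α |U|`. -/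
def SimpleGraph.IsExpander {V : Type*} [Fintype V] (G : SimpleGraph V) (α : ℝ) : Prop :=
  ∀ U : Set V, (U.ncard : ℝ) ≤ (Fintype.card V : ℝ) / 2 →
    α * U.ncard ≤ ((G.extNb U).ncard : ℝ)

/-- `G` is a `(k, α)`-expander if every vertex subset `U` with `|U| ≤ k`
satisfies `|N_G(U)| ≥ α |U|`. -/
def SimpleGraph.IsKExpander {V : Type*} (G : SimpleGraph V) (k α : ℝ) : Prop :=
  ∀ U : Set V, (U.ncard : ℝ) ≤ k → α * U.ncard ≤ ((G.extNb U).ncard : ℝ)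

/-- A vertex set `S` is a separator in `G` if the vertex set can be partitioned as
`V = A ∪ B ∪ S` with `|A|, |B| ≤ 2n/3` and no edges between `A` and `B`. -/
def SimpleGraph.IsSeparator {V : Type*} [Fintype V] (G : SimpleGraph V) (S : Set V) : Prop :=
  ∃ A B : Set V, A ∪ B ∪ S = Set.univ ∧
    Disjoint A B ∧ Disjoint A S ∧ Disjoint B S ∧
    (A.ncard : ℝ) ≤ 2 * (Fintype.card V : ℝ) / 3 ∧
    (B.ncard : ℝ) ≤ 2 * (Fintype.card V : ℝ) / 3 ∧
    ∀ a ∈ A, ∀ b ∈ B, ¬ G.Adj a b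

/-!
Grow a set `D` of removed vertices by repeatedly adding a subset `U` of the remaining
vertices `W = Dᶜ` that violates expansion inside `W`, keeping the invariant
`|N(D)| ≤ (3β/2)|D|`: a violating `U` contributes fewer than `(3β/2)|U|` new neighbours.
Since `|U| ≤ |W|/2`, a set `D` with `|D| < n/3` grows to one with `|D| < 2n/3`, so
as soon as `|D| ≥ n/3` the set `N(D)` separates `D` from the rest and has size
`< (3β/2)(2n/3) = βn`, which is impossible. Hence a largest `D` with `|D| < n/3` and the
invariant leaves an expanding `W` with `|W| > 2n/3`.
-/

lemma Set.cast_ncard_compl {α : Type*} [Fintype α] (s : Set α) :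
    (sᶜ.ncard : ℝ) = Fintype.card α - s.ncard := by
  rw [eq_sub_iff_add_eq, ← Nat.cast_add, add_comm, Set.ncard_add_ncard_compl,
    Nat.card_eq_fintype_card]

namespace SimpleGraph

variable {V : Type*} (G : SimpleGraph V)

@[simp]
lemma extNb_empty : G.extNb ∅ = ∅ := by
  ext v
  simp [extNb]

lemma extNb_union_subset (D U : Set V) :
    G.extNb (D ∪ U) ⊆ G.extNb D ∪ (G.extNb U \ D) := by
  rintro v ⟨hv, u, hu | hu, hadj⟩
  · exact Or.inl ⟨fun hvD => hv (Or.inl hvD), u, hu, hadj⟩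
  · exact Or.inr ⟨⟨fun hvU => hv (Or.inr hvU), u, hu, hadj⟩, fun hvD => hv (Or.inl hvD)⟩

lemma ncard_extNb_union_le [Finite V] {α : ℝ} {D U : Set V} (hDU : Disjoint D U)
    (hD : ((G.extNb D).ncard : ℝ) ≤ α * D.ncard)
    (hU : ((G.extNb U \ D).ncard : ℝ) ≤ α * U.ncard) :
    ((G.extNb (D ∪ U)).ncard : ℝ) ≤ α * (D ∪ U).ncard := by
  have hsub : (G.extNb (D ∪ U)).ncard ≤ (G.extNb D).ncard + (G.extNb U \ D).ncard :=
    (Set.ncard_le_ncard (G.extNb_union_subset D U)).trans (Set.ncard_union_le _ _)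
  rw [Set.ncard_union_eq hDU]
  push_cast
  calc ((G.extNb (D ∪ U)).ncard : ℝ)
      ≤ (G.extNb D).ncard + (G.extNb U \ D).ncard := by exact_mod_cast hsub
    _ ≤ α * (D.ncard + U.ncard) := by linarith

lemma isSeparator_extNb [Fintype V] {D : Set V} (h₁ : (Fintype.card V : ℝ) ≤ 3 * D.ncard)
    (h₂ : (D.ncard : ℝ) ≤ 2 * Fintype.card V / 3) : G.IsSeparator (G.extNb D) := by
  refine ⟨D, (D ∪ G.extNb D)ᶜ, ?_, ?_, ?_, ?_, h₂, ?_, ?_⟩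
  · rw [Set.union_right_comm, Set.union_compl_self]
  · exact Set.disjoint_left.2 fun v hv hv' => hv' (Or.inl hv)
  · exact Set.disjoint_left.2 fun v hv hv' => hv'.1 hv
  · exact Set.disjoint_left.2 fun v hv hv' => hv (Or.inr hv')
  · have hle : (D ∪ G.extNb D)ᶜ.ncard ≤ Dᶜ.ncard :=
      Set.ncard_le_ncard (Set.compl_subset_compl.2 Set.subset_union_left)
    have hle' : ((D ∪ G.extNb D)ᶜ.ncard : ℝ) ≤ Dᶜ.ncard := by exact_mod_cast hle
    linarith [Set.cast_ncard_compl D]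
  · intro a ha b hb hab
    exact hb (Or.inr ⟨fun hbD => hb (Or.inl hbD), a, ha, hab⟩)

lemma image_val_extNb_induce (W : Set V) (U : Set W) :
    Subtype.val '' ((G.induce W).extNb U) = G.extNb (Subtype.val '' U) ∩ W := by
  ext v
  constructor
  · rintro ⟨v', ⟨hv'U, u', hu'U, hadj⟩, rfl⟩
    refine ⟨⟨?_, u', ⟨u', hu'U, rfl⟩, hadj⟩, v'.2⟩
    rintro ⟨x, hxU, hx⟩
    exact hv'U (Subtype.val_injective hx ▸ hxU)
  · rintro ⟨⟨hvU, _, ⟨u', hu'U, rfl⟩, hadj⟩, hvW⟩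
    exact ⟨⟨v, hvW⟩, ⟨fun hmem => hvU ⟨⟨v, hvW⟩, hmem, rfl⟩, u', hu'U, hadj⟩, rfl⟩

lemma isExpander_induce_of_forall {α : ℝ} {W : Set V} [Fintype W]
    (hW : ∀ U ⊆ W, (U.ncard : ℝ) ≤ W.ncard / 2 → α * U.ncard ≤ (G.extNb U ∩ W).ncard) :
    (G.induce W).IsExpander α := by
  intro U hU
  have hcard : Fintype.card W = W.ncard := by
    rw [← Nat.card_coe_set_eq, Nat.card_eq_fintype_card]
  have hUcard : (Subtype.val '' U).ncard = U.ncard :=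
    Set.ncard_image_of_injective _ Subtype.val_injective
  have hNcard : ((G.induce W).extNb U).ncard = (G.extNb (Subtype.val '' U) ∩ W).ncard := by
    rw [← image_val_extNb_induce, Set.ncard_image_of_injective _ Subtype.val_injective]
  rw [hNcard, ← hUcard]
  exact hW _ (Subtype.coe_image_subset W U) (by rwa [hUcard, ← hcard])

lemma exists_large_set_expanding [Fintype V] {β : ℝ} (hβ : 0 < β)
    (h : ∀ S : Set V, G.IsSeparator S → β * (Fintype.card V : ℝ) ≤ (S.ncard : ℝ)) :
    ∃ W : Set V, 2 * (Fintype.card V : ℝ) / 3 ≤ W.ncard ∧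
      ∀ U ⊆ W, (U.ncard : ℝ) ≤ W.ncard / 2 → 3 * β / 2 * U.ncard ≤ (G.extNb U ∩ W).ncard := by
  set n : ℝ := (Fintype.card V : ℝ)
  rcases (show (0 : ℝ) ≤ n by positivity).eq_or_lt with hn | hn
  · refine ⟨∅, by linarith, fun U hU _ => ?_⟩
    simp [Set.subset_empty_iff.1 hU]
  obtain ⟨D, ⟨hDsmall, hD⟩, hDmax⟩ := Set.exists_max_image
    {D : Set V | 3 * (D.ncard : ℝ) < n ∧ ((G.extNb D).ncard : ℝ) ≤ 3 * β / 2 * D.ncard}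
    Set.ncard (Set.toFinite _) ⟨∅, by simp [hn]⟩
  have hDc := Set.cast_ncard_compl D
  refine ⟨Dᶜ, by linarith, fun U hUD hUhalf => ?_⟩
  by_contra! hU
  rw [Set.inter_comm, ← Set.sdiff_eq_compl_inter] at hU
  have hDU : Disjoint D U := Set.subset_compl_iff_disjoint_left.1 hUD
  have hcard : ((D ∪ U).ncard : ℝ) = D.ncard + U.ncard := by
    rw [Set.ncard_union_eq hDU]; push_cast; ring
  have hUpos : (0 : ℝ) < U.ncard := by
    by_contra! hU0
    have hN0 : (0 : ℝ) ≤ (G.extNb U \ D).ncard := Nat.cast_nonneg _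
    nlinarith
  have hN := G.ncard_extNb_union_le hDU hD hU.le
  by_cases hsmall : 3 * ((D ∪ U).ncard : ℝ) < n
  · have hmax : ((D ∪ U).ncard : ℝ) ≤ D.ncard := by exact_mod_cast hDmax (D ∪ U) ⟨hsmall, hN⟩
    linarith
  · have hlt : ((D ∪ U).ncard : ℝ) < 2 * n / 3 := by linarith
    have hsep := h _ (G.isSeparator_extNb (by linarith) hlt.le)
    nlinarith

end SimpleGraph

theorem stmt_8 {V : Type*} [Fintype V] (G : SimpleGraph V) (β : ℝ) (hβ : 0 < β)
    (h : ∀ S : Set V, G.IsSeparator S → β * (Fintype.card V : ℝ) ≤ (S.ncard : ℝ)) :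
    ∃ W : Set V, 2 * (Fintype.card V : ℝ) / 3 ≤ (W.ncard : ℝ) ∧
      (G.induce W).IsExpander (3 * β / 2) := by
  obtain ⟨W, hW, hexp⟩ := G.exists_large_set_expanding hβ h
  exact ⟨W, hW, G.isExpander_induce_of_forall hexp⟩
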